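/- arXiv:1712.08555 — 2 statements merged into one kernel-verified Lean document; each statement's English description precedes it below -/
import Mathlib

section
/- For the infinite-server fixed point q* (q_i* = 1 for i ≤ K, q_{K+1}* = f, q_i* = 0 for i ≥ K+2 with K = ⌊λ⌋, f = λ - K), verification that the fluid drift vanishes at q*: for every i ≥ 1, λ·p_{i-1}(q*) = i·(q_i* - q_{i+1}*). -/
open scoped Classical

/-- `m(q) = min{i : q_{i+1} < 1}`, the minimum number of active tasks per server pool. -/
noncomputable def mQ (q : ℕ → ℝ) : ℕ := sInf {i | q (i + 1) < 1}

/-- The instantaneous fraction `p_i(q)` of arrivals assigned to server pools with exactly `i`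
tasks under the JSQ policy with infinite-server dynamics. -/
noncomputable def pINF (lam : ℝ) (q : ℕ → ℝ) (i : ℕ) : ℝ :=
  if mQ q = 0 then (if i = 0 then 1 else 0)
  else if i = mQ q - 1 then min ((mQ q : ℝ) * (1 - q (mQ q + 1)) / lam) 1
  else if i = mQ q then 1 - min ((mQ q : ℝ) * (1 - q (mQ q + 1)) / lam) 1
  else 0

/-- verification that the infinite-server fluid drift vanishes at the fixed
point `q*`: for every `i ≥ 1`, `λ p_{i-1}(q*) = i (q_i* - q_{i+1}*)`. -/
theorem infinite_server_drift_vanishes (lam : ℝ) (hl : 0 < lam)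
    (K : ℕ) (hK : K = ⌊lam⌋₊) (f : ℝ) (hf : f = lam - K)
    (qstar : ℕ → ℝ)
    (hq : ∀ i, 1 ≤ i → qstar i = if i ≤ K then 1 else if i = K + 1 then f else 0) :
    ∀ i : ℕ, 1 ≤ i →
      lam * pINF lam qstar (i - 1) = (i : ℝ) * (qstar i - qstar (i + 1)) := by
  have hf0 : 0 ≤ f := by
    rw [hf, hK]; have := Nat.floor_le hl.le; linarith
  have hf1 : f < 1 := by
    rw [hf, hK]; have := Nat.lt_floor_add_one lam; push_cast at this ⊢; linarith
  have hlamKf : lam = (K : ℝ) + f := by rw [hf]; ring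
  have hm : mQ qstar = K := by
    have hmem : K ∈ {i | qstar (i + 1) < 1} := by
      simp only [Set.mem_setOf_eq]
      rw [hq (K + 1) (by omega)]
      simp [hf1]
    refine le_antisymm (Nat.sInf_le hmem) (le_csInf ⟨K, hmem⟩ ?_)
    intro j hj
    by_contra h
    push_neg at h
    have hj1 : qstar (j + 1) = 1 := by
      rw [hq (j + 1) (by omega), if_pos (by omega)]
    simp only [Set.mem_setOf_eq, hj1] at hj
    exact lt_irrefl _ hj
  intro i hi
  rcases Nat.eq_zero_or_pos K with hK0 | hKpos
  · -- K = 0 : mQ = 0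
    subst hK0
    rw [pINF, if_pos hm]
    rcases eq_or_lt_of_le hi with h1 | h2
    · have : i = 1 := h1.symm
      subst this
      rw [hq 1 (by omega), hq 2 (by omega)]
      norm_num
      all_goals (push_cast at hlamKf; linarith [hlamKf])
    · have hi1 : i - 1 ≠ 0 := by omega
      rw [if_neg hi1, hq i hi, hq (i + 1) (by omega)]
      rw [if_neg (by omega), if_neg (by omega), if_neg (by omega), if_neg (by omega)]
      ring
  · -- K ≥ 1 : mQ = K
    have hmin : min ((K : ℝ) * (1 - qstar (K + 1)) / lam) 1
        = (K : ℝ) * (1 - f) / lam := by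
      have hq1 : qstar (K + 1) = f := by
        rw [hq (K + 1) (by omega), if_neg (by omega), if_pos rfl]
      rw [hq1, min_eq_left]
      rw [div_le_one hl]
      have hK0 : (0 : ℝ) ≤ (K : ℝ) := Nat.cast_nonneg K
      nlinarith
    rw [pINF, if_neg (by rw [hm]; omega), hm]
    by_cases hiK : i = K
    · subst hiK
      rw [if_pos (by omega), hmin, hq i (by omega), hq (i + 1) (by omega)]
      rw [if_pos le_rfl, if_neg (by omega), if_pos rfl]
      field_simp
    · by_cases hiK1 : i = K + 1
      · subst hiK1
        rw [if_neg (by omega), if_pos (by omega), hmin,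
          hq (K + 1) (by omega), hq (K + 2) (by omega)]
        rw [if_neg (by omega), if_pos rfl, if_neg (by omega), if_neg (by omega)]
        field_simp
        rw [hlamKf]; push_cast; ring
      · rw [if_neg (by omega), if_neg (by omega)]
        rcases lt_or_gt_of_ne hiK with hlt | hgt
        · rw [hq i hi, hq (i + 1) (by omega), if_pos (by omega), if_pos (by omega)]
          ring
        · rw [hq i hi, hq (i + 1) (by omega), if_neg (by omega), if_neg (by omega),
            if_neg (by omega), if_neg (by omega)]
          ring
end

section
/- In the multiple-dispatcher queueing scenario, if α_1 > 1/R (strictly heterogeneous loads) and 0 < λ < 1, then r* ≥ 1 and λ₂(R, λ, α) > 0, hence the limiting mean waiting time λ₂/(1-λ₂) is strictly positive. -/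
/-- in the multiple-dispatcher queueing scenario, if `α_1 > 1/R`
(strictly heterogeneous loads) and `0 < λ < 1`, then `r* ≥ 1`, the forwarding rate
`λ₂ > 0`, and the limiting mean waiting time `λ₂/(1-λ₂)` is strictly positive. -/
theorem heterogeneous_loads_positive_waiting (R : ℕ) (hR : 1 ≤ R) (lam : ℝ)
    (h0 : 0 < lam) (h1 : lam < 1)
    (α : ℕ → ℝ) (hαpos : ∀ r, 1 ≤ r → r ≤ R → 0 < α r)
    (hαmono : ∀ r s, 1 ≤ r → r ≤ s → s ≤ R → α s ≤ α r)
    (hαsum : ∑ i ∈ Finset.Icc 1 R, α i = 1)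
    (hα1 : α 1 > 1 / R)
    (cond : ℕ → Prop)
    (hcond : ∀ r, cond r ↔
      α r > (1 / (R : ℝ)) * (1 - lam * ∑ i ∈ Finset.Icc 1 r, α i) /
        (1 - lam * r / R))
    (rstar : ℕ)
    (hrstar : rstar = sSup ({r | 1 ≤ r ∧ r ≤ R ∧ cond r} ∪ {0}))
    (lam2 : ℝ)
    (hlam2 : lam2 = 1 - (1 - lam * ∑ i ∈ Finset.Icc 1 rstar, α i) /
      (1 - lam * rstar / R)) :
    1 ≤ rstar ∧ 0 < lam2 ∧ 0 < lam2 / (1 - lam2) := by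
  have hRpos : (0:ℝ) < R := by exact_mod_cast Nat.lt_of_lt_of_le Nat.zero_lt_one hR
  have hR1 : (1:ℝ) ≤ R := by exact_mod_cast hR
  -- cond 1 holds
  have hd1 : 0 < 1 - lam * 1 / R := by
    have : lam * 1 / R ≤ lam := by
      rw [mul_one]
      calc lam / R ≤ lam / 1 := by
            apply div_le_div_of_nonneg_left h0.le one_pos hR1
        _ = lam := div_one lam
    linarith
  have hcond1 : cond 1 := by
    rw [hcond]
    rw [Finset.Icc_self, Finset.sum_singleton]
    push_cast
    rw [gt_iff_lt, div_lt_iff₀ hd1, div_mul_eq_mul_div, div_lt_iff₀ hRpos]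
    have hα1' : 1 < α 1 * R := (div_lt_iff₀ hRpos).mp hα1
    have key : α 1 * (1 - lam * 1 / R) * R = α 1 * R - α 1 * lam := by
      field_simp
    nlinarith [hα1', key]
  -- set facts
  set S : Set ℕ := {r | 1 ≤ r ∧ r ≤ R ∧ cond r} ∪ {0} with hS
  have hbdd : BddAbove S := by
    refine ⟨R, fun x hx => ?_⟩
    rcases hx with ⟨_, h, _⟩ | h
    · exact h
    · simp at h; omega
  have h1S : 1 ∈ S := Or.inl ⟨le_rfl, hR, hcond1⟩
  have hge1 : 1 ≤ rstar := by
    rw [hrstar]; exact le_csSup hbdd h1S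
  have hmem : rstar ∈ S := by
    rw [hrstar]; exact Nat.sSup_mem ⟨1, h1S⟩ hbdd
  have hrfacts : 1 ≤ rstar ∧ rstar ≤ R ∧ cond rstar := by
    rcases hmem with h | h
    · exact h
    · simp at h; omega
  obtain ⟨hr1, hrR, hcondr⟩ := hrfacts
  have hrR' : (rstar:ℝ) ≤ R := by exact_mod_cast hrR
  have hr1' : (1:ℝ) ≤ rstar := by exact_mod_cast hr1
  -- denominator positive
  have hden : 0 < 1 - lam * rstar / R := by
    have : lam * rstar / R ≤ lam := by
      rw [div_le_iff₀ hRpos]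
      nlinarith
    linarith
  set Sr := ∑ i ∈ Finset.Icc 1 rstar, α i with hSr
  -- Sr ≤ 1
  have hSr1 : Sr ≤ 1 := by
    rw [← hαsum]
    apply Finset.sum_le_sum_of_subset_of_nonneg
    · apply Finset.Icc_subset_Icc le_rfl hrR
    · intro i hi _
      simp only [Finset.mem_Icc] at hi
      exact (hαpos i hi.1 hi.2).le
  -- key: Sr > rstar / R
  have hkey : (rstar:ℝ) / R < Sr := by
    by_contra hcon
    push_neg at hcon
    have hratio : (1:ℝ) ≤ (1 - lam * Sr) / (1 - lam * rstar / R) := by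
      rw [le_div_iff₀ hden]
      have : lam * Sr ≤ lam * (rstar / R) := by
        apply mul_le_mul_of_nonneg_left hcon h0.le
      rw [one_mul]
      have : lam * (rstar/R) = lam * rstar / R := by ring
      linarith [mul_le_mul_of_nonneg_left hcon h0.le]
    have hαr : 1 / (R:ℝ) < α rstar := by
      rw [hcond] at hcondr
      calc 1 / (R:ℝ) = 1 / (R:ℝ) * 1 := (mul_one _).symm
        _ ≤ 1 / (R:ℝ) * ((1 - lam * Sr) / (1 - lam * rstar / R)) := by
            apply mul_le_mul_of_nonneg_left hratio (by positivity)
        _ = (1 / (R:ℝ)) * (1 - lam * Sr) / (1 - lam * rstar / R) := by ring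
        _ < α rstar := hcondr
    -- sum lower bound
    have hlb : (rstar:ℝ) * α rstar ≤ Sr := by
      have : ∀ i ∈ Finset.Icc 1 rstar, α rstar ≤ α i := by
        intro i hi
        simp only [Finset.mem_Icc] at hi
        exact hαmono i rstar hi.1 hi.2 hrR
      calc (rstar:ℝ) * α rstar
          = (Finset.Icc 1 rstar).card * α rstar := by
            rw [Nat.card_Icc]; norm_num
        _ ≤ Sr := by simpa using Finset.card_nsmul_le_sum _ _ _ this
    have : (rstar:ℝ) / R < (rstar:ℝ) * α rstar := by
      rw [div_lt_iff₀ hRpos]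
      have h1R : 1 / (R:ℝ) * R = 1 := by field_simp
      nlinarith [mul_lt_mul_of_pos_left hαr (lt_of_lt_of_le zero_lt_one hr1')]
    linarith
  -- conclude
  have hnum : 0 < 1 - lam * Sr := by nlinarith
  have hlt : (1 - lam * Sr) / (1 - lam * rstar / R) < 1 := by
    rw [div_lt_one hden]
    have : lam * (rstar/R) < lam * Sr := mul_lt_mul_of_pos_left hkey h0
    have h2 : lam * (rstar/R) = lam * rstar / R := by ring
    linarith
  have hlam2pos : 0 < lam2 := by rw [hlam2]; linarith
  have hlam2lt : lam2 < 1 := by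
    rw [hlam2]
    have := div_pos hnum hden
    linarith
  exact ⟨hge1, hlam2pos, div_pos hlam2pos (by linarith)⟩
end
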